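/- There exists a constant C > 0 such that for all ξ, η ∈ ℝ³ with η ≠ 0 and η ≠ ξ, the Laplacian of Φ₁ in η, namely Δ_ηΦ₁(ξ,η) = −(p''(|ξ−η|) + 2p'(|ξ−η|)/|ξ−η|) − (p''(|η|) + 2p'(|η|)/|η|), satisfies |Δ_ηΦ₁(ξ,η)| ≤ C / min(|ξ−η|, |η|). -/

import Mathlib

/-!
Write `p = r q` with `q = √((2 + r²)/(1 + r²)) ∈ [1, √2]`. Then `r p'' + 2 p'` is a combination of `q`
and of the ratios `r²/((1 + r²)² q)`, `r⁴/((1 + r²)³ q)`, `r⁴/((1 + r²)⁴ q³)`, all of which lie in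
`[0, 1]`, so it is bounded by an absolute constant. Dividing by `r`, the radial Laplacian
`p'' + 2p'/r` is `O(1/r)`, and the triangle inequality gives the bound in `1 / min (|ξ - η|, |η|)`.
-/

noncomputable def q (r : ℝ) : ℝ := Real.sqrt ((2 + r ^ 2) / (1 + r ^ 2))
noncomputable def p (r : ℝ) : ℝ := r * q r
noncomputable def Φ₁ (ξ η : EuclideanSpace ℝ (Fin 3)) : ℝ :=
  p ‖ξ‖ - p ‖ξ - η‖ - p ‖η‖

lemma q_pos (r : ℝ) : 0 < q r := Real.sqrt_pos.mpr (by positivity)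

lemma one_le_q (r : ℝ) : 1 ≤ q r :=
  Real.one_le_sqrt.mpr <| (one_le_div₀ (by positivity)).mpr (by linarith)

lemma q_le_three_halves (r : ℝ) : q r ≤ 3 / 2 := by
  have hsq : q r ^ 2 = (2 + r ^ 2) / (1 + r ^ 2) := Real.sq_sqrt (by positivity)
  have hle : (2 + r ^ 2) / (1 + r ^ 2) ≤ 2 := by
    rw [div_le_iff₀ (by positivity)]; nlinarith
  nlinarith [q_pos r]

lemma hasDerivAt_q (r : ℝ) : HasDerivAt q (-r / ((1 + r ^ 2) ^ 2 * q r)) r := by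
  have hnum : HasDerivAt (fun x : ℝ => 2 + x ^ 2) (2 * r) r := by
    simpa using (hasDerivAt_pow 2 r).const_add 2
  have hden : HasDerivAt (fun x : ℝ => 1 + x ^ 2) (2 * r) r := by
    simpa using (hasDerivAt_pow 2 r).const_add 1
  refine ((hnum.fun_div hden (by positivity)).sqrt (by positivity)).congr_deriv ?_
  have hq := (q_pos r).ne'
  rw [q] at hq ⊢
  field_simp
  ring

noncomputable def pDeriv (r : ℝ) : ℝ := q r - r ^ 2 / ((1 + r ^ 2) ^ 2 * q r)

noncomputable def pDeriv2 (r : ℝ) : ℝ :=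
  -3 * r / ((1 + r ^ 2) ^ 2 * q r) + 4 * r ^ 3 / ((1 + r ^ 2) ^ 3 * q r)
    - r ^ 3 / ((1 + r ^ 2) ^ 4 * q r ^ 3)

lemma hasDerivAt_p (r : ℝ) : HasDerivAt p (pDeriv r) r := by
  refine ((hasDerivAt_id r).mul (hasDerivAt_q r)).congr_deriv ?_
  have hq := (q_pos r).ne'
  rw [pDeriv, id_eq]
  field_simp
  ring

lemma hasDerivAt_pDeriv (r : ℝ) : HasDerivAt pDeriv (pDeriv2 r) r := by
  have hden := (((hasDerivAt_pow 2 r).const_add 1).fun_pow 2).fun_mul (hasDerivAt_q r)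
  have hq := (q_pos r).ne'
  refine ((hasDerivAt_q r).fun_sub ((hasDerivAt_pow 2 r).fun_div hden (by positivity))).congr_deriv ?_
  rw [pDeriv2]
  field_simp
  ring

lemma deriv_p : deriv p = pDeriv := funext fun r => (hasDerivAt_p r).deriv

lemma deriv_deriv_p : deriv (deriv p) = pDeriv2 := by
  rw [deriv_p]; exact funext fun r => (hasDerivAt_pDeriv r).deriv

lemma abs_mul_pDeriv2_add_two_mul_pDeriv_le (r : ℝ) : |r * pDeriv2 r + 2 * pDeriv r| ≤ 13 := by
  have hq₁ := one_le_q r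
  have hq₂ := q_le_three_halves r
  have hd : (0 : ℝ) < 1 + r ^ 2 := by positivity
  have hq₃ : 1 ≤ q r ^ 3 := one_le_pow₀ hq₁
  have he : r * pDeriv2 r + 2 * pDeriv r =
      2 * q r - 5 * (r ^ 2 / ((1 + r ^ 2) ^ 2 * q r)) +
        4 * (r ^ 4 / ((1 + r ^ 2) ^ 3 * q r)) - r ^ 4 / ((1 + r ^ 2) ^ 4 * q r ^ 3) := by
    have hq := (q_pos r).ne'
    rw [pDeriv2, pDeriv]
    field_simp
    ring
  have t₂ : r ^ 2 / ((1 + r ^ 2) ^ 2 * q r) ≤ 1 := by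
    rw [div_le_one (by positivity)]; nlinarith
  have t₃ : r ^ 4 / ((1 + r ^ 2) ^ 3 * q r) ≤ 1 := by
    rw [div_le_one (by positivity)]; nlinarith [pow_pos hd 3]
  have t₄ : r ^ 4 / ((1 + r ^ 2) ^ 4 * q r ^ 3) ≤ 1 := by
    rw [div_le_one (by positivity)]
    nlinarith [pow_pos hd 4, mul_le_mul_of_nonneg_left hq₃ (pow_pos hd 4).le]
  have t₂' : 0 ≤ r ^ 2 / ((1 + r ^ 2) ^ 2 * q r) := by positivity
  have t₃' : 0 ≤ r ^ 4 / ((1 + r ^ 2) ^ 3 * q r) := by positivity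
  have t₄' : 0 ≤ r ^ 4 / ((1 + r ^ 2) ^ 4 * q r ^ 3) := by positivity
  rw [he, abs_le]
  constructor <;> linarith

/-- The Laplacian of `x ↦ f ‖x‖` on `ℝ³`, at a point of norm `r`. -/
noncomputable def radialLaplacian (f : ℝ → ℝ) (r : ℝ) : ℝ := deriv (deriv f) r + 2 * deriv f r / r

lemma abs_radialLaplacian_p_le {r : ℝ} (hr : 0 < r) : |radialLaplacian p r| ≤ 13 / r := by
  have h : radialLaplacian p r = (r * pDeriv2 r + 2 * pDeriv r) / r := by
    rw [radialLaplacian, deriv_deriv_p, deriv_p]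
    field_simp
  rw [h, abs_div, abs_of_pos hr]
  gcongr
  exact abs_mul_pDeriv2_add_two_mul_pDeriv_le r

lemma abs_neg_sub_le_div_min {f : ℝ → ℝ} {K : ℝ} (hK : 0 ≤ K) (hf : ∀ r, 0 < r → |f r| ≤ K / r)
    {a b : ℝ} (ha : 0 < a) (hb : 0 < b) : |-f a - f b| ≤ 2 * K / min a b := by
  have hm : 0 < min a b := lt_min ha hb
  calc |-f a - f b| ≤ |-f a| + |f b| := abs_sub _ _
    _ = |f a| + |f b| := by rw [abs_neg]
    _ ≤ K / a + K / b := add_le_add (hf a ha) (hf b hb)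
    _ ≤ K / min a b + K / min a b := by
      gcongr
      exacts [min_le_left a b, min_le_right a b]
    _ = 2 * K / min a b := by ring

theorem stmt11 :
    ∃ C : ℝ, 0 < C ∧
      ∀ ξ η : EuclideanSpace ℝ (Fin 3), η ≠ 0 → η ≠ ξ →
        |-(deriv (deriv p) ‖ξ - η‖ + 2 * deriv p ‖ξ - η‖ / ‖ξ - η‖) -
            (deriv (deriv p) ‖η‖ + 2 * deriv p ‖η‖ / ‖η‖)| ≤
          C / min ‖ξ - η‖ ‖η‖ := by
  refine ⟨2 * 13, by norm_num, fun ξ η hη hηξ => ?_⟩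
  have hξη : 0 < ‖ξ - η‖ := norm_pos_iff.mpr (sub_ne_zero.mpr hηξ.symm)
  exact abs_neg_sub_le_div_min (f := radialLaplacian p) (by norm_num)
    (fun _ hr => abs_radialLaplacian_p_le hr) hξη (norm_pos_iff.mpr hη)
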